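/- arXiv:2103.09722 — 2 statements merged into one kernel-verified Lean document; each statement's English description precedes it below -/
import Mathlib

section
/- Let q ≥ 2 be odd, let (P, L) be a finite projective plane of order q, and let O ⊆ P be an oval. Then every point Q ∈ P with Q ∉ O lies on exactly 0 or exactly 2 tangent lines of O. -/
/-- A finite projective plane of order `q`, given by its set of lines (each line a
finite set of points of the ambient point type `P`): any two distinct points lie on
exactly one common line, any two distinct lines meet in exactly one point, there are
four points no three of which are collinear, and every line has `q + 1` points. -/
structure IsProjectivePlane (q : ℕ) {P : Type} [DecidableEq P] (L : Finset (Finset P)) : Prop where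
  exists_unique_line : ∀ p₁ p₂ : P, p₁ ≠ p₂ → ∃! ℓ, ℓ ∈ L ∧ p₁ ∈ ℓ ∧ p₂ ∈ ℓ
  exists_unique_point : ∀ ℓ₁ ∈ L, ∀ ℓ₂ ∈ L, ℓ₁ ≠ ℓ₂ → ∃! p, p ∈ ℓ₁ ∧ p ∈ ℓ₂
  nondeg : ∃ a b c d : P, a ≠ b ∧ a ≠ c ∧ a ≠ d ∧ b ≠ c ∧ b ≠ d ∧ c ≠ d ∧
      ∀ ℓ ∈ L, (ℓ ∩ ({a, b, c, d} : Finset P)).card ≤ 2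
  card_line : ∀ ℓ ∈ L, ℓ.card = q + 1

/-- An oval: a set of `q + 1` points such that every line contains at most two of them. -/
def IsOval (q : ℕ) {P : Type} [DecidableEq P] (L : Finset (Finset P)) (O : Finset P) : Prop :=
  O.card = q + 1 ∧ ∀ ℓ ∈ L, (ℓ ∩ O).card ≤ 2

/-- A projective bundle: a set of `q² + q + 1` ovals, any two of which meet in
exactly one point. -/
def IsProjectiveBundle (q : ℕ) {P : Type} [DecidableEq P] (L : Finset (Finset P))
    (B : Finset (Finset P)) : Prop :=
  B.card = q ^ 2 + q + 1 ∧ (∀ o ∈ B, IsOval q L o) ∧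
    ∀ o₁ ∈ B, ∀ o₂ ∈ B, o₁ ≠ o₂ → (o₁ ∩ o₂).card = 1

/-!
Joining a point `x` to the points of `O`, the lines through `x` meet `O` in `q + 1` points in
total, each in at most two. So for odd `q` a point off `O` lies on an even number of tangents,
and a point of `O` lies on exactly one tangent (the other `q` lines through it are the secants
to the other points of `O`); hence there are `q + 1` tangents. If `Q ∉ O` lies on a tangent `m`,
the other `q` tangents meet `m` in points off `O`, so the `q` points of `m \ O` carry `2q`
tangent incidences; each carries an even positive number of them, hence exactly two.
-/

open Finset

namespace Finset

variable {ι : Type*} {s : Finset ι} {f : ι → ℕ}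

theorem sum_add_card_filter_eq_zero_of_le_one (h : ∀ i ∈ s, f i ≤ 1) :
    ∑ i ∈ s, f i + #{i ∈ s | f i = 0} = #s := by
  rw [card_filter, ← sum_add_distrib, card_eq_sum_ones]
  refine sum_congr rfl fun i hi => ?_
  have := h i hi
  split_ifs <;> omega

theorem card_filter_eq_one_add_two_mul_of_le_two (h : ∀ i ∈ s, f i ≤ 2) :
    #{i ∈ s | f i = 1} + 2 * #{i ∈ s | f i = 2} = ∑ i ∈ s, f i := by
  rw [card_filter, card_filter, mul_sum, ← sum_add_distrib]
  refine sum_congr rfl fun i hi => ?_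
  have := h i hi
  split_ifs <;> omega

end Finset

namespace IsProjectivePlane

variable {q : ℕ} {P : Type} [DecidableEq P] {L : Finset (Finset P)}

theorem eq_of_mem_of_mem (hL : IsProjectivePlane q L) {a b : P} (hab : a ≠ b)
    {ℓ₁ ℓ₂ : Finset P} (h₁ : ℓ₁ ∈ L) (ha₁ : a ∈ ℓ₁) (hb₁ : b ∈ ℓ₁)
    (h₂ : ℓ₂ ∈ L) (ha₂ : a ∈ ℓ₂) (hb₂ : b ∈ ℓ₂) : ℓ₁ = ℓ₂ := by
  obtain ⟨ℓ, -, hu⟩ := hL.exists_unique_line a b hab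
  rw [hu ℓ₁ ⟨h₁, ha₁, hb₁⟩, hu ℓ₂ ⟨h₂, ha₂, hb₂⟩]

theorem card_filter_mem_mem (hL : IsProjectivePlane q L) {a b : P} (hab : a ≠ b) :
    #{ℓ ∈ L | a ∈ ℓ ∧ b ∈ ℓ} = 1 := by
  simpa [card_eq_one_iff_existsUnique, and_assoc] using hL.exists_unique_line a b hab

theorem sum_card_inter_filter_mem (hL : IsProjectivePlane q L) {x : P} {S : Finset P}
    (hx : x ∉ S) : ∑ ℓ ∈ L with x ∈ ℓ, #(ℓ ∩ S) = #S := by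
  simp_rw [inter_comm _ S]
  rw [sum_card_inter (n := 1) fun a ha => ?_, mul_one]
  rw [filter_filter]
  exact hL.card_filter_mem_mem fun h => hx (h ▸ ha)

theorem exists_notMem (hL : IsProjectivePlane q L) (p : P) : ∃ ℓ ∈ L, p ∉ ℓ := by
  obtain ⟨a, b, c, d, hab, hac, had, hbc, -, hcd, hquad⟩ := hL.nondeg
  have no_three : ∀ ℓ ∈ L, ∀ x ∈ ({a, b, c, d} : Finset P), ∀ y ∈ ({a, b, c, d} : Finset P),
      ∀ z ∈ ({a, b, c, d} : Finset P), x ≠ y → x ≠ z → y ≠ z → x ∈ ℓ → y ∈ ℓ → z ∉ ℓ := by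
    intro ℓ hℓ x hx y hy z hz hxy hxz hyz hxℓ hyℓ hzℓ
    refine (hquad ℓ hℓ).not_gt (two_lt_card.2 ?_)
    exact ⟨x, mem_inter.2 ⟨hxℓ, hx⟩, y, mem_inter.2 ⟨hyℓ, hy⟩, z, mem_inter.2 ⟨hzℓ, hz⟩,
      hxy, hxz, hyz⟩
  obtain ⟨ℓab, ⟨hℓab, haab, hbab⟩, -⟩ := hL.exists_unique_line a b hab
  obtain ⟨ℓcd, ⟨hℓcd, hccd, hdcd⟩, -⟩ := hL.exists_unique_line c d hcd
  obtain ⟨ℓac, ⟨hℓac, haac, hcac⟩, -⟩ := hL.exists_unique_line a c hac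
  by_contra! hp
  by_cases hpa : p = a
  · exact no_three ℓcd hℓcd c (by simp) d (by simp) a (by simp) hcd hac.symm had.symm
      hccd hdcd (hpa ▸ hp ℓcd hℓcd)
  · have hℓ : ℓab = ℓac := hL.eq_of_mem_of_mem hpa hℓab (hp ℓab hℓab) haab hℓac
      (hp ℓac hℓac) haac
    exact no_three ℓab hℓab a (by simp) b (by simp) c (by simp) hab hac hbc haab hbab
      (hℓ ▸ hcac)

theorem card_filter_mem (hL : IsProjectivePlane q L) (p : P) : #{ℓ ∈ L | p ∈ ℓ} = q + 1 := by
  obtain ⟨ℓ₀, hℓ₀, hp⟩ := hL.exists_notMem p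
  rw [← hL.card_line ℓ₀ hℓ₀, ← hL.sum_card_inter_filter_mem hp, card_eq_sum_ones]
  refine sum_congr rfl fun ℓ hℓ => ?_
  rw [mem_filter] at hℓ
  have hne : ℓ ≠ ℓ₀ := fun h => hp (h ▸ hℓ.2)
  exact (card_eq_one_iff_existsUnique.2 <| by
    simpa using hL.exists_unique_point ℓ hℓ.1 ℓ₀ hℓ₀ hne).symm

end IsProjectivePlane

section Tangents

variable {q : ℕ} {P : Type} [DecidableEq P] {L : Finset (Finset P)} {O : Finset P}

def tangents (L : Finset (Finset P)) (O : Finset P) : Finset (Finset P) :=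
  {ℓ ∈ L | #(ℓ ∩ O) = 1}

def tangentsThrough (L : Finset (Finset P)) (O : Finset P) (x : P) : Finset (Finset P) :=
  {ℓ ∈ L | x ∈ ℓ ∧ #(ℓ ∩ O) = 1}

theorem filter_mem_tangents (x : P) :
    {ℓ ∈ tangents L O | x ∈ ℓ} = tangentsThrough L O x := by
  rw [tangents, tangentsThrough, filter_filter]
  exact filter_congr fun _ _ => and_comm

theorem mem_tangents_of_mem_tangentsThrough {x : P} {ℓ : Finset P}
    (h : ℓ ∈ tangentsThrough L O x) : ℓ ∈ tangents L O := by
  rw [← filter_mem_tangents x] at h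
  exact (mem_filter.1 h).1

theorem card_sdiff_of_mem_tangents (hL : IsProjectivePlane q L) {m : Finset P}
    (hm : m ∈ tangents L O) : #(m \ O) = q := by
  rw [tangents, mem_filter] at hm
  rw [card_sdiff, inter_comm, hm.2, hL.card_line m hm.1, Nat.add_sub_cancel]

namespace IsOval

theorem even_card_tangentsThrough (hL : IsProjectivePlane q L) (hO : IsOval q L O)
    (hodd : Odd q) {x : P} (hx : x ∉ O) : Even #(tangentsThrough L O x) := by
  have h := card_filter_eq_one_add_two_mul_of_le_two (s := {ℓ ∈ L | x ∈ ℓ})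
    (f := fun ℓ => #(ℓ ∩ O)) fun ℓ hℓ => hO.2 ℓ (mem_filter.1 hℓ).1
  rw [hL.sum_card_inter_filter_mem hx, hO.1, filter_filter] at h
  exact (Nat.even_add.1 (h ▸ hodd.add_one)).2 (even_two_mul _)

theorem card_tangentsThrough_of_mem (hL : IsProjectivePlane q L) (hO : IsOval q L O)
    {p : P} (hp : p ∈ O) : #(tangentsThrough L O p) = 1 := by
  have hsucc : ∀ ℓ : Finset P, p ∈ ℓ → #(ℓ ∩ O.erase p) + 1 = #(ℓ ∩ O) := fun ℓ hpℓ => by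
    rw [inter_erase, card_erase_add_one (mem_inter.2 ⟨hpℓ, hp⟩)]
  have h := sum_add_card_filter_eq_zero_of_le_one (s := {ℓ ∈ L | p ∈ ℓ})
    (f := fun ℓ => #(ℓ ∩ O.erase p)) fun ℓ hℓ => by
      have := hsucc ℓ (mem_filter.1 hℓ).2
      have := hO.2 ℓ (mem_filter.1 hℓ).1
      omega
  rw [hL.sum_card_inter_filter_mem (notMem_erase p O), card_erase_of_mem hp, hO.1,
    hL.card_filter_mem p, filter_filter] at h
  have htangent : {ℓ ∈ L | p ∈ ℓ ∧ #(ℓ ∩ O.erase p) = 0} = tangentsThrough L O p :=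
    filter_congr fun ℓ _ => by
      constructor <;> rintro ⟨hpℓ, hk⟩ <;> have := hsucc ℓ hpℓ <;> exact ⟨hpℓ, by omega⟩
  rw [htangent] at h
  omega

theorem eq_of_mem_tangentsThrough (hL : IsProjectivePlane q L) (hO : IsOval q L O)
    {p : P} (hp : p ∈ O) {ℓ₁ ℓ₂ : Finset P} (h₁ : ℓ₁ ∈ tangentsThrough L O p)
    (h₂ : ℓ₂ ∈ tangentsThrough L O p) : ℓ₁ = ℓ₂ :=
  card_le_one.1 (hO.card_tangentsThrough_of_mem hL hp).le ℓ₁ h₁ ℓ₂ h₂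

theorem card_tangents (hL : IsProjectivePlane q L) (hO : IsOval q L O) :
    #(tangents L O) = q + 1 :=
  calc #(tangents L O) = ∑ ℓ ∈ tangents L O, #(O ∩ ℓ) := by
        rw [card_eq_sum_ones]
        exact sum_congr rfl fun ℓ hℓ => by rw [inter_comm, (mem_filter.1 hℓ).2]
    _ = #O * 1 := sum_card_inter fun p hp => by
        rw [filter_mem_tangents]
        exact hO.card_tangentsThrough_of_mem hL hp
    _ = q + 1 := by rw [mul_one, hO.1]

theorem card_sdiff_inter_eq_one (hL : IsProjectivePlane q L) (hO : IsOval q L O)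
    {m ℓ : Finset P} (hm : m ∈ tangents L O) (hℓ : ℓ ∈ tangents L O) (hne : ℓ ≠ m) :
    #((m \ O) ∩ ℓ) = 1 := by
  rw [tangents, mem_filter] at hm hℓ
  obtain ⟨z, ⟨hzℓ, hzm⟩, hu⟩ := hL.exists_unique_point ℓ hℓ.1 m hm.1 hne
  have hzO : z ∉ O := fun hzO => hne <| hO.eq_of_mem_tangentsThrough hL hzO
    (mem_filter.2 ⟨hℓ.1, hzℓ, hℓ.2⟩) (mem_filter.2 ⟨hm.1, hzm, hm.2⟩)
  refine card_eq_one_iff_existsUnique.2 ⟨z, by simp [hzℓ, hzm, hzO], fun w hw => ?_⟩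
  simp only [mem_inter, mem_sdiff] at hw
  exact hu w ⟨hw.2, hw.1.1⟩

theorem sum_card_tangentsThrough_sdiff (hL : IsProjectivePlane q L) (hO : IsOval q L O)
    {m : Finset P} (hm : m ∈ tangents L O) :
    ∑ x ∈ m \ O, #(tangentsThrough L O x) = 2 * q :=
  calc ∑ x ∈ m \ O, #(tangentsThrough L O x)
      = ∑ ℓ ∈ tangents L O, #((m \ O) ∩ ℓ) := by
        simp_rw [← filter_mem_tangents, ← filter_mem_eq_inter]
        exact sum_card_bipartiteAbove_eq_sum_card_bipartiteBelow (r := fun x ℓ => x ∈ ℓ)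
    _ = #((m \ O) ∩ m) + ∑ ℓ ∈ (tangents L O).erase m, 1 := by
        rw [← add_sum_erase _ _ hm]
        congr 1
        exact sum_congr rfl fun ℓ hℓ => hO.card_sdiff_inter_eq_one hL hm
          (mem_of_mem_erase hℓ) (ne_of_mem_erase hℓ)
    _ = 2 * q := by
        rw [inter_eq_left.2 sdiff_subset, card_sdiff_of_mem_tangents hL hm, sum_const,
          card_erase_of_mem hm, hO.card_tangents hL, smul_eq_mul, mul_one]
        omega

theorem card_tangentsThrough_eq_two (hL : IsProjectivePlane q L) (hO : IsOval q L O)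
    (hodd : Odd q) {m : Finset P} (hm : m ∈ tangents L O) {x : P} (hx : x ∈ m \ O) :
    #(tangentsThrough L O x) = 2 := by
  have htwo_le : ∀ y ∈ m \ O, 2 ≤ #(tangentsThrough L O y) := fun y hy => by
    rw [mem_sdiff] at hy
    have hpos : 0 < #(tangentsThrough L O y) := card_pos.2 ⟨m, by
      rw [← filter_mem_tangents]; exact mem_filter.2 ⟨hm, hy.1⟩⟩
    obtain ⟨k, hk⟩ := hO.even_card_tangentsThrough hL hodd hy.2
    omega
  have hsum : ∑ _y ∈ m \ O, 2 = ∑ y ∈ m \ O, #(tangentsThrough L O y) := by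
    rw [hO.sum_card_tangentsThrough_sdiff hL hm, sum_const, card_sdiff_of_mem_tangents hL hm,
      smul_eq_mul, mul_comm]
  exact ((sum_eq_sum_iff_of_le htwo_le).1 hsum x hx).symm

end IsOval

end Tangents

theorem statement_5_general (q : ℕ) (hodd : Odd q) (P : Type) [DecidableEq P]
    (L : Finset (Finset P)) (hL : IsProjectivePlane q L)
    (O : Finset P) (hO : IsOval q L O) (Q : P) (hQ : Q ∉ O) :
    (L.filter fun ℓ => Q ∈ ℓ ∧ (ℓ ∩ O).card = 1).card = 0 ∨
    (L.filter fun ℓ => Q ∈ ℓ ∧ (ℓ ∩ O).card = 1).card = 2 := by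
  change #(tangentsThrough L O Q) = 0 ∨ #(tangentsThrough L O Q) = 2
  obtain h | ⟨m, hm⟩ := (tangentsThrough L O Q).eq_empty_or_nonempty
  · exact Or.inl (card_eq_zero.2 h)
  · have hQm : Q ∈ m := (mem_filter.1 hm).2.1
    exact Or.inr <| hO.card_tangentsThrough_eq_two hL hodd
      (mem_tangents_of_mem_tangentsThrough hm) (mem_sdiff.2 ⟨hQm, hQ⟩)

/-- In a finite projective plane of odd order `q ≥ 2`, every point not on an
oval `O` lies on exactly 0 or exactly 2 tangent lines of `O`. -/
theorem statement_5 (q : ℕ) (hq : 2 ≤ q) (hodd : Odd q) (P : Type) [Fintype P] [DecidableEq P]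
    (L : Finset (Finset P)) (hL : IsProjectivePlane q L)
    (O : Finset P) (hO : IsOval q L O) (Q : P) (hQ : Q ∉ O) :
    (L.filter fun ℓ => Q ∈ ℓ ∧ (ℓ ∩ O).card = 1).card = 0 ∨
    (L.filter fun ℓ => Q ∈ ℓ ∧ (ℓ ∩ O).card = 1).card = 2 :=
  statement_5_general q hodd P L hL O hO Q hQ
end

section
/- Let q ≥ 2 be even, let (P, L) be a finite projective plane of order q, let B be a projective bundle, and let ℓ ∈ L be a line. Then there exists a point N ∈ P with N ∉ ℓ such that every oval of B tangent to ℓ contains N; that is, the q+1 tangent ovals of ℓ are concurrent. -/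
/-!
Counting the incidences of `B` with the points of the plane to first and second order shows
that every point lies on exactly `q + 1` ovals of `B`, so any two points lie on a unique oval of
`B`. Hence the ovals through a point partition the remaining points; in particular each point
of `ℓ` lies on exactly one tangent oval, there are `q + 1` tangents, and two tangents meet off `ℓ`.
Through a point `x ∉ ℓ` the ovals partition the `q + 1` points of `ℓ` into pieces of size at
most two, and `q + 1` is odd, so one of them is tangent. If `t x` is the number of tangents
through `x ∉ ℓ`, the first two moments of `t` over the `q²` points off `ℓ` give
`∑ (t x - 1) (t x - (q + 1)) = 0`, a sum of nonpositive terms. So `t` only takes the values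
`1` and `q + 1`, and `∑ t = q (q + 1) > q²` forces the value `q + 1`.
-/

open Finset

section Moments

variable {ι : Type*} {s : Finset ι} {f : ι → ℕ}

theorem Finset.eq_of_sum_eq_of_sum_sq_eq {c : ℕ} (h₁ : ∑ x ∈ s, f x = #s * c)
    (h₂ : ∑ x ∈ s, f x ^ 2 = #s * c ^ 2) {x : ι} (hx : x ∈ s) : f x = c := by
  have h₁' : ∑ y ∈ s, (f y : ℤ) = #s * c := by exact_mod_cast h₁
  have h₂' : ∑ y ∈ s, (f y : ℤ) ^ 2 = #s * c ^ 2 := by exact_mod_cast h₂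
  have hvar : ∑ y ∈ s, ((f y : ℤ) - c) ^ 2 = 0 := by
    simp only [sub_sq, sum_add_distrib, sum_sub_distrib, ← sum_mul, ← mul_sum, sum_const,
      nsmul_eq_mul]
    linear_combination h₂' - 2 * (c : ℤ) * h₁'
  have := (sum_eq_zero_iff_of_nonneg fun y _ => sq_nonneg ((f y : ℤ) - c)).1 hvar x hx
  exact_mod_cast sub_eq_zero.1 (pow_eq_zero_iff two_ne_zero |>.1 this)

theorem Finset.eq_or_eq_of_sum_sq_add_eq {a b : ℕ} (hf : ∀ x ∈ s, a ≤ f x ∧ f x ≤ b)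
    (h : ∑ x ∈ s, f x ^ 2 + #s * (a * b) = (a + b) * ∑ x ∈ s, f x) {x : ι} (hx : x ∈ s) :
    f x = a ∨ f x = b := by
  have h' : ∑ y ∈ s, (f y : ℤ) ^ 2 + #s * (a * b) = (a + b) * ∑ y ∈ s, (f y : ℤ) := by
    exact_mod_cast h
  have hsum : ∑ y ∈ s, ((f y : ℤ) - a) * (f y - b) = 0 := by
    simp only [sub_mul, mul_sub, ← sq, sum_sub_distrib, ← sum_mul, ← mul_sum, sum_const,
      nsmul_eq_mul]
    linear_combination h'
  have hnonpos : ∀ y ∈ s, ((f y : ℤ) - a) * (f y - b) ≤ 0 := fun y hy =>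
    mul_nonpos_of_nonneg_of_nonpos (by linarith [(hf y hy).1]) (by linarith [(hf y hy).2])
  have := (sum_eq_zero_iff_of_nonpos hnonpos).1 hsum x hx
  rcases mul_eq_zero.1 this with h | h
  · exact Or.inl (by omega)
  · exact Or.inr (by omega)

end Moments

section DoubleCounting

variable {ι α : Type*} [DecidableEq α]

theorem Finset.sum_card_filter_mem_eq_sum_card_inter (s : Finset α) (I : Finset ι)
    (A : ι → Finset α) : ∑ x ∈ s, #{i ∈ I | x ∈ A i} = ∑ i ∈ I, #(s ∩ A i) := by
  simp_rw [← filter_mem_eq_inter, card_filter]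
  exact sum_comm

variable {s : Finset α} {F : Finset (Finset α)} {k : ℕ}

theorem Finset.sum_card_filter_mem_of_card_inter (hk : ∀ o ∈ F, #(s ∩ o) = k) :
    ∑ x ∈ s, #{o ∈ F | x ∈ o} = #F * k := by
  rw [sum_card_filter_mem_eq_sum_card_inter, sum_congr rfl hk, sum_const, smul_eq_mul]

theorem Finset.sum_sq_card_filter_mem_of_card_inter (hk : ∀ o ∈ F, #(s ∩ o) = k)
    (hF : ∀ o ∈ F, ∀ o' ∈ F, o ≠ o' → #(s ∩ (o ∩ o')) = 1) :
    ∑ x ∈ s, #{o ∈ F | x ∈ o} ^ 2 = #F * k + #F * (#F - 1) := by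
  have hpairs : ∀ x, #{o ∈ F | x ∈ o} ^ 2 = #{p ∈ F ×ˢ F | x ∈ p.1 ∩ p.2} := by
    intro x
    rw [sq, ← card_product, ← filter_product]
    simp only [mem_inter]
  have hrow : ∀ o ∈ F, ∑ o' ∈ F, #(s ∩ (o ∩ o')) = k + (#F - 1) := by
    intro o ho
    rw [← add_sum_erase _ _ ho, inter_self, hk o ho,
      sum_congr rfl fun o' ho' => hF o ho o' (mem_erase.1 ho').2 (mem_erase.1 ho').1.symm,
      sum_const, card_erase_of_mem ho, smul_eq_mul, mul_one]
  simp_rw [hpairs]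
  rw [sum_card_filter_mem_eq_sum_card_inter, sum_product, sum_congr rfl hrow, sum_const,
    smul_eq_mul, mul_add]

end DoubleCounting

namespace IsProjectivePlane

variable {q : ℕ} {P : Type} [DecidableEq P] {L : Finset (Finset P)}

instance : Membership P L := ⟨fun l p => p ∈ (l : Finset P)⟩

theorem eq_of_mem_of_mem_s10 (hL : IsProjectivePlane q L) {x y : P} (hxy : x ≠ y) {l₁ l₂ : Finset P}
    (hl₁ : l₁ ∈ L) (hl₂ : l₂ ∈ L) (hx₁ : x ∈ l₁) (hy₁ : y ∈ l₁) (hx₂ : x ∈ l₂) (hy₂ : y ∈ l₂) :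
    l₁ = l₂ :=
  (hL.exists_unique_line x y hxy).unique ⟨hl₁, hx₁, hy₁⟩ ⟨hl₂, hx₂, hy₂⟩

theorem exists_quadrangle (hL : IsProjectivePlane q L) :
    ∃ a b c d : P, a ≠ b ∧ a ≠ c ∧ a ≠ d ∧ b ≠ c ∧ b ≠ d ∧ c ≠ d ∧
      ∀ l ∈ L, ∀ x ∈ ({a, b, c, d} : Finset P), ∀ y ∈ ({a, b, c, d} : Finset P),
        ∀ z ∈ ({a, b, c, d} : Finset P), x ≠ y → x ≠ z → y ≠ z → x ∈ l → y ∈ l → z ∉ l := by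
  obtain ⟨a, b, c, d, hab, hac, had, hbc, hbd, hcd, hquad⟩ := hL.nondeg
  refine ⟨a, b, c, d, hab, hac, had, hbc, hbd, hcd,
    fun l hl x hx y hy z hz hxy hxz hyz hxl hyl hzl =>
      (hquad l hl).not_gt (two_lt_card.2 ⟨x, ?_, y, ?_, z, ?_, hxy, hxz, hyz⟩)⟩ <;>
    exact mem_inter.2 ⟨‹_›, ‹_›⟩

noncomputable abbrev toProjectivePlane (hL : IsProjectivePlane q L) :
    Configuration.ProjectivePlane P L where
  eq_or_eq {p₁ p₂ l₁ l₂} h₁₁ h₂₁ h₁₂ h₂₂ :=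
    or_iff_not_imp_left.2 fun h => Subtype.ext (hL.eq_of_mem_of_mem_s10 h l₁.2 l₂.2 h₁₁ h₂₁ h₁₂ h₂₂)
  mkPoint {l₁ l₂} h := (hL.exists_unique_point _ l₁.2 _ l₂.2 (Subtype.coe_ne_coe.2 h)).exists.choose
  mkPoint_ax {l₁ l₂} h :=
    (hL.exists_unique_point _ l₁.2 _ l₂.2 (Subtype.coe_ne_coe.2 h)).exists.choose_spec
  mkLine {p₁ p₂} h := ⟨_, (hL.exists_unique_line p₁ p₂ h).exists.choose_spec.1⟩
  mkLine_ax {p₁ p₂} h := (hL.exists_unique_line p₁ p₂ h).exists.choose_spec.2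
  exists_point l := by
    obtain ⟨a, b, c, _, hab, hac, -, hbc, -, -, hQ⟩ := hL.exists_quadrangle
    by_cases ha : a ∈ (l : Finset P)
    · by_cases hb : b ∈ (l : Finset P)
      · exact ⟨c, hQ l l.2 a (by simp) b (by simp) c (by simp) hab hac hbc ha hb⟩
      · exact ⟨b, hb⟩
    · exact ⟨a, ha⟩
  exists_line p := by
    obtain ⟨a, b, c, _, hab, hac, -, hbc, -, -, hQ⟩ := hL.exists_quadrangle
    obtain ⟨lab, ⟨hlab, halab, hblab⟩, -⟩ := hL.exists_unique_line a b hab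
    obtain ⟨lac, ⟨hlac, halac, hclac⟩, -⟩ := hL.exists_unique_line a c hac
    obtain ⟨lbc, ⟨hlbc, hblbc, hclbc⟩, -⟩ := hL.exists_unique_line b c hbc
    by_contra! h
    have hpa : p = a := by
      by_contra hpa
      have := hL.eq_of_mem_of_mem_s10 hpa hlab hlac (h ⟨lab, hlab⟩) halab (h ⟨lac, hlac⟩) halac
      exact hQ lab hlab a (by simp) b (by simp) c (by simp) hab hac hbc halab hblab (this ▸ hclac)
    exact hQ lbc hlbc b (by simp) c (by simp) a (by simp) hbc hab.symm hac.symm hblbc hclbc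
      (hpa ▸ h ⟨lbc, hlbc⟩)
  exists_config := by
    obtain ⟨a, b, c, d, hab, hac, had, hbc, hbd, hcd, hQ⟩ := hL.exists_quadrangle
    obtain ⟨lad, ⟨hlad, halad, hdlad⟩, -⟩ := hL.exists_unique_line a d had
    obtain ⟨lbc, ⟨hlbc, hblbc, hclbc⟩, -⟩ := hL.exists_unique_line b c hbc
    obtain ⟨lbd, ⟨hlbd, hblbd, hdlbd⟩, -⟩ := hL.exists_unique_line b d hbd
    exact ⟨a, b, c, ⟨lad, hlad⟩, ⟨lbc, hlbc⟩, ⟨lbd, hlbd⟩,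
      hQ lbc hlbc b (by simp) c (by simp) a (by simp) hbc hab.symm hac.symm hblbc hclbc,
      hQ lbd hlbd b (by simp) d (by simp) a (by simp) hbd hab.symm had.symm hblbd hdlbd,
      hQ lad hlad a (by simp) d (by simp) b (by simp) had hab hbd.symm halad hdlad,
      hblbc, hblbd,
      hQ lad hlad a (by simp) d (by simp) c (by simp) had hac hcd.symm halad hdlad,
      hclbc,
      hQ lbd hlbd b (by simp) d (by simp) c (by simp) hbd hbc hcd.symm hblbd hdlbd⟩

theorem card_points [Fintype P] (hL : IsProjectivePlane q L) :
    Fintype.card P = q ^ 2 + q + 1 := by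
  let _ := hL.toProjectivePlane
  obtain ⟨a, b, -, -, hab, -⟩ := hL.exists_quadrangle
  obtain ⟨l, hl, -⟩ := hL.exists_unique_line a b hab
  have horder : Configuration.ProjectivePlane.order P L = q := by
    have h := Configuration.ProjectivePlane.pointCount_eq P (⟨l, hl.1⟩ : L)
    change Nat.card {p // p ∈ l} = _ at h
    rw [Nat.card_eq_finsetCard, hL.card_line l hl.1] at h
    omega
  rw [Configuration.ProjectivePlane.card_points P L, horder]

end IsProjectivePlane

namespace IsProjectiveBundle

variable {q : ℕ} {P : Type} [DecidableEq P] {L B : Finset (Finset P)}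

theorem card_of_mem (hB : IsProjectiveBundle q L B) {o : Finset P} (ho : o ∈ B) : #o = q + 1 :=
  (hB.2.1 o ho).1

theorem card_inter_le_two (hB : IsProjectiveBundle q L B) {o ℓ : Finset P} (ho : o ∈ B)
    (hℓ : ℓ ∈ L) : #(o ∩ ℓ) ≤ 2 := by
  rw [inter_comm]
  exact (hB.2.1 o ho).2 ℓ hℓ

theorem eq_of_mem_of_mem_s10 (hB : IsProjectiveBundle q L B) {x y : P} (hxy : x ≠ y)
    {o₁ o₂ : Finset P} (h₁ : o₁ ∈ B) (h₂ : o₂ ∈ B) (hx₁ : x ∈ o₁) (hy₁ : y ∈ o₁) (hx₂ : x ∈ o₂)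
    (hy₂ : y ∈ o₂) : o₁ = o₂ := by
  by_contra hne
  have := hB.2.2 o₁ h₁ o₂ h₂ hne
  exact (one_lt_card.2 ⟨x, mem_inter.2 ⟨hx₁, hx₂⟩, y, mem_inter.2 ⟨hy₁, hy₂⟩, hxy⟩).ne' this

theorem pairwiseDisjoint_erase (hB : IsProjectiveBundle q L B) (x : P) :
    (({o ∈ B | x ∈ o} : Finset _) : Set (Finset P)).PairwiseDisjoint (·.erase x) := by
  intro o₁ h₁ o₂ h₂ hne
  simp only [coe_filter, Set.mem_ofPred_eq] at h₁ h₂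
  refine disjoint_left.2 fun y hy₁ hy₂ => hne ?_
  rw [mem_erase] at hy₁ hy₂
  exact hB.eq_of_mem_of_mem_s10 hy₁.1.symm h₁.1 h₂.1 h₁.2 hy₁.2 h₂.2 hy₂.2

variable [Fintype P]

theorem card_filter_mem (hL : IsProjectivePlane q L) (hB : IsProjectiveBundle q L B) (x : P) :
    #{o ∈ B | x ∈ o} = q + 1 := by
  have hpts : #(univ : Finset P) = q ^ 2 + q + 1 := by rw [card_univ, hL.card_points]
  have hk : ∀ o ∈ B, #(univ ∩ o) = q + 1 := fun o ho => by rw [univ_inter, hB.card_of_mem ho]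
  have hmeet : ∀ o ∈ B, ∀ o' ∈ B, o ≠ o' → #(univ ∩ (o ∩ o')) = 1 := fun o ho o' ho' hne => by
    rw [univ_inter, hB.2.2 o ho o' ho' hne]
  refine eq_of_sum_eq_of_sum_sq_eq (f := fun y => #{o ∈ B | y ∈ o}) ?_ ?_ (mem_univ x)
  · rw [sum_card_filter_mem_of_card_inter hk, hB.1, hpts]
  · rw [sum_sq_card_filter_mem_of_card_inter hk hmeet, hB.1, hpts, Nat.add_sub_cancel]
    ring

theorem exists_mem_mem (hL : IsProjectivePlane q L) (hB : IsProjectiveBundle q L B) {x y : P}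
    (hxy : x ≠ y) : ∃ o ∈ B, x ∈ o ∧ y ∈ o := by
  set U := {o ∈ B | x ∈ o}.biUnion (·.erase x)
  have hsub : U ⊆ univ.erase x := fun z hz => by
    obtain ⟨o, -, hz⟩ := mem_biUnion.1 hz
    exact mem_erase.2 ⟨(mem_erase.1 hz).1, mem_univ z⟩
  have hcard : #(univ.erase x) ≤ #U := by
    rw [card_biUnion (hB.pairwiseDisjoint_erase x), card_erase_of_mem (mem_univ x), card_univ,
      hL.card_points, sum_congr rfl fun o ho => card_erase_of_mem (mem_filter.1 ho).2,
      sum_congr rfl fun o ho => by rw [hB.card_of_mem (mem_filter.1 ho).1], sum_const,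
      hB.card_filter_mem hL x, smul_eq_mul, Nat.add_sub_cancel, Nat.add_sub_cancel]
    exact (by ring : (q + 1) * q = q ^ 2 + q).ge
  obtain ⟨o, ho, hyo⟩ := mem_biUnion.1 (eq_of_subset_of_card_le hsub hcard ▸
    mem_erase.2 ⟨hxy.symm, mem_univ y⟩ : y ∈ U)
  exact ⟨o, (mem_filter.1 ho).1, (mem_filter.1 ho).2, (mem_erase.1 hyo).2⟩

theorem sum_card_inter_erase (hL : IsProjectivePlane q L) (hB : IsProjectiveBundle q L B)
    (x : P) (s : Finset P) : ∑ o ∈ B with x ∈ o, #((s ∩ o).erase x) = #(s.erase x) := by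
  rw [← card_biUnion ((hB.pairwiseDisjoint_erase x).mono fun o =>
    erase_subset_erase x inter_subset_right)]
  congr 1
  ext y
  simp only [mem_biUnion, mem_filter, mem_erase, mem_inter]
  constructor
  · rintro ⟨o, -, hyx, hys, -⟩
    exact ⟨hyx, hys⟩
  · rintro ⟨hyx, hys⟩
    obtain ⟨o, ho, hxo, hyo⟩ := hB.exists_mem_mem hL (Ne.symm hyx)
    exact ⟨o, ⟨ho, hxo⟩, hyx, hys, hyo⟩

variable {ℓ : Finset P}

theorem exists_tangent_mem_of_notMem (heven : Even q) (hL : IsProjectivePlane q L)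
    (hB : IsProjectiveBundle q L B) (hℓ : ℓ ∈ L) {x : P} (hx : x ∉ ℓ) :
    ∃ o ∈ B, x ∈ o ∧ #(o ∩ ℓ) = 1 := by
  have hsum := hB.sum_card_inter_erase hL x ℓ
  simp only [erase_eq_of_notMem hx, erase_eq_of_notMem fun h => hx (mem_inter.1 h).1] at hsum
  have hodd : Odd (∑ o ∈ B with x ∈ o, #(ℓ ∩ o)) := by
    rw [hsum, hL.card_line ℓ hℓ]
    exact heven.add_one
  by_contra! h
  refine (Nat.not_even_iff_odd.2 hodd) (even_sum _ fun o ho => ?_)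
  obtain ⟨hoB, hxo⟩ := mem_filter.1 ho
  have hle := hB.card_inter_le_two hoB hℓ
  have hne := h o hoB hxo
  rw [inter_comm] at hle hne
  interval_cases #(ℓ ∩ o) <;> simp_all

theorem card_tangent_mem_of_mem (hL : IsProjectivePlane q L) (hB : IsProjectiveBundle q L B)
    (hℓ : ℓ ∈ L) {p : P} (hp : p ∈ ℓ) : #{o ∈ B | p ∈ o ∧ #(o ∩ ℓ) = 1} = 1 := by
  have hsecant : ∀ o ∈ {o ∈ B | p ∈ o},
      #((ℓ ∩ o).erase p) = if ¬ #(o ∩ ℓ) = 1 then 1 else 0 := by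
    intro o ho
    obtain ⟨hoB, hpo⟩ := mem_filter.1 ho
    have hle := hB.card_inter_le_two hoB hℓ
    rw [card_erase_of_mem (mem_inter.2 ⟨hp, hpo⟩), inter_comm]
    have hpos : 0 < #(o ∩ ℓ) := card_pos.2 ⟨p, mem_inter.2 ⟨hpo, hp⟩⟩
    split_ifs <;> omega
  have hsum := hB.sum_card_inter_erase hL p ℓ
  rw [sum_congr rfl hsecant, ← card_filter, card_erase_of_mem hp, hL.card_line ℓ hℓ] at hsum
  have hsplit := card_filter_add_card_filter_not (s := {o ∈ B | p ∈ o}) (fun o => #(o ∩ ℓ) = 1)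
  rw [hB.card_filter_mem hL p, hsum, filter_filter] at hsplit
  omega

theorem card_tangents (hL : IsProjectivePlane q L) (hB : IsProjectiveBundle q L B)
    (hℓ : ℓ ∈ L) : #{o ∈ B | #(o ∩ ℓ) = 1} = q + 1 := by
  have h := sum_card_filter_mem_of_card_inter (s := ℓ) (F := {o ∈ B | #(o ∩ ℓ) = 1}) (k := 1)
    fun o ho => by rw [inter_comm]; exact (mem_filter.1 ho).2
  have hpoint : ∀ p ∈ ℓ, #{o ∈ {o ∈ B | #(o ∩ ℓ) = 1} | p ∈ o} = 1 := fun p hp => by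
    rw [filter_filter, filter_congr fun o _ => and_comm]
    exact hB.card_tangent_mem_of_mem hL hℓ hp
  rw [sum_congr rfl hpoint, sum_const, smul_eq_mul, mul_one, mul_one, hL.card_line ℓ hℓ] at h
  exact h.symm

theorem card_compl_inter_of_tangent (hB : IsProjectiveBundle q L B) {o : Finset P} (ho : o ∈ B)
    (ht : #(o ∩ ℓ) = 1) : #(ℓᶜ ∩ o) = q := by
  have h := card_sdiff_add_card_inter o ℓ
  rw [sdiff_eq_inter_compl, inter_comm, ht, hB.card_of_mem ho] at h
  omega

theorem card_compl_inter_inter_of_tangent (hL : IsProjectivePlane q L)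
    (hB : IsProjectiveBundle q L B) (hℓ : ℓ ∈ L) {o₁ o₂ : Finset P} (h₁ : o₁ ∈ B) (h₂ : o₂ ∈ B)
    (hne : o₁ ≠ o₂) (ht₁ : #(o₁ ∩ ℓ) = 1) (ht₂ : #(o₂ ∩ ℓ) = 1) : #(ℓᶜ ∩ (o₁ ∩ o₂)) = 1 := by
  obtain ⟨z, hz⟩ := card_eq_one.1 (hB.2.2 o₁ h₁ o₂ h₂ hne)
  have hzo : z ∈ o₁ ∩ o₂ := hz ▸ mem_singleton_self z
  have hzℓ : z ∉ ℓ := fun hzℓ => hne <| card_le_one.1 (hB.card_tangent_mem_of_mem hL hℓ hzℓ).le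
    o₁ (mem_filter.2 ⟨h₁, (mem_inter.1 hzo).1, ht₁⟩)
    o₂ (mem_filter.2 ⟨h₂, (mem_inter.1 hzo).2, ht₂⟩)
  rw [hz, inter_singleton_of_mem (mem_compl.2 hzℓ), card_singleton]

end IsProjectiveBundle

/-- For `q ≥ 2` even, a projective bundle `B` and a line `ℓ`, the ovals of `B`
tangent to `ℓ` are concurrent: there is a point `N ∉ ℓ` contained in every oval of `B`
tangent to `ℓ`. -/
theorem statement_10 (q : ℕ) (hq : 2 ≤ q) (heven : Even q) (P : Type) [Fintype P] [DecidableEq P]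
    (L : Finset (Finset P)) (hL : IsProjectivePlane q L)
    (B : Finset (Finset P)) (hB : IsProjectiveBundle q L B)
    (ℓ : Finset P) (hℓ : ℓ ∈ L) :
    ∃ N : P, N ∉ ℓ ∧ ∀ o ∈ B, (o ∩ ℓ).card = 1 → N ∈ o := by
  set T := {o ∈ B | #(o ∩ ℓ) = 1}
  have hT : #T = q + 1 := hB.card_tangents hL hℓ
  have hE : #ℓᶜ = q ^ 2 := by
    rw [card_compl, hL.card_points, hL.card_line ℓ hℓ]
    omega
  have hk : ∀ o ∈ T, #(ℓᶜ ∩ o) = q := fun o ho =>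
    hB.card_compl_inter_of_tangent (mem_filter.1 ho).1 (mem_filter.1 ho).2
  have hsum := sum_card_filter_mem_of_card_inter hk
  have hsum_sq := sum_sq_card_filter_mem_of_card_inter hk fun o₁ h₁ o₂ h₂ hne =>
    hB.card_compl_inter_inter_of_tangent hL hℓ (mem_filter.1 h₁).1 (mem_filter.1 h₂).1 hne
      (mem_filter.1 h₁).2 (mem_filter.1 h₂).2
  have hbounds : ∀ x ∈ ℓᶜ, 1 ≤ #{o ∈ T | x ∈ o} ∧ #{o ∈ T | x ∈ o} ≤ q + 1 := fun x hx => by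
    obtain ⟨o, ho, hxo, ht⟩ := hB.exists_tangent_mem_of_notMem heven hL hℓ (mem_compl.1 hx)
    exact ⟨card_pos.2 ⟨o, mem_filter.2 ⟨mem_filter.2 ⟨ho, ht⟩, hxo⟩⟩, hT ▸ card_filter_le _ _⟩
  obtain ⟨N, hN, hNT⟩ : ∃ N ∈ ℓᶜ, #{o ∈ T | N ∈ o} = q + 1 := by
    by_contra! h
    have hmoments : ∑ x ∈ ℓᶜ, #{o ∈ T | x ∈ o} ^ 2 + #ℓᶜ * (1 * (q + 1)) =
        (1 + (q + 1)) * ∑ x ∈ ℓᶜ, #{o ∈ T | x ∈ o} := by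
      rw [hsum, hsum_sq, hT, hE, Nat.add_sub_cancel]
      ring
    have hone : ∀ x ∈ ℓᶜ, #{o ∈ T | x ∈ o} = 1 := fun x hx =>
      (eq_or_eq_of_sum_sq_add_eq hbounds hmoments hx).resolve_right (h x hx)
    rw [sum_congr rfl hone, sum_const, smul_eq_mul, hE, hT] at hsum
    nlinarith
  have hall : {o ∈ T | N ∈ o} = T := eq_of_subset_of_card_le (filter_subset _ _) (by rw [hNT, hT])
  exact ⟨N, mem_compl.1 hN, fun o ho ht => filter_eq_self.1 hall o (mem_filter.2 ⟨ho, ht⟩)⟩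
end
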